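/- arXiv:2603.01040 — 4 statements merged into one kernel-verified Lean document; each statement's English description precedes it below -/
import Mathlib

section
/- Let n ≥ 1 and let p, p', q, q' ∈ ℝⁿ be probability vectors. Then |cos(p,q) − cos(p',q')| ≤ 2√n · (‖p − p'‖₂ + ‖q − q'‖₂), where cos(a,b) = ⟨a,b⟩/(‖a‖₂·‖b‖₂). That is, the cosine similarity restricted to the probability simplex in ℝⁿ is Lipschitz in each argument with explicit constant K_cos = 2√n. -/
/-- A probability vector in `ℝⁿ` (with the Euclidean norm). -/
def IsProbVec {n : ℕ} (p : EuclideanSpace ℝ (Fin n)) : Prop :=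
  (∀ i, 0 ≤ p i) ∧ ∑ i, p i = 1

/-- Cosine similarity. -/
noncomputable def cosSim {E : Type*} [NormedAddCommGroup E] [InnerProductSpace ℝ E]
    (a b : E) : ℝ :=
  (inner ℝ a b : ℝ) / (‖a‖ * ‖b‖)

/-!
Writing `cos(a, b) = ⟪a / ‖a‖, b / ‖b‖⟫`, the cosine similarity is the inner product of two unit
vectors, which is 1-Lipschitz in each argument. Normalization satisfies
`‖a / ‖a‖ - b / ‖b‖‖ ≤ 2 ‖a - b‖ / ‖a‖`, and on the probability simplex Cauchy–Schwarz gives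
`1 = ∑ pᵢ ≤ √n ‖p‖`, i.e. `1 / ‖p‖ ≤ √n`.
-/

open RealInnerProductSpace

section Normalize

variable {E : Type*} [NormedAddCommGroup E] [InnerProductSpace ℝ E]

theorem norm_inv_norm_smul_le_one (x : E) : ‖‖x‖⁻¹ • x‖ ≤ 1 := by
  rw [norm_smul, norm_inv, norm_norm]
  exact inv_mul_le_one

theorem norm_inv_norm_smul_sub_inv_norm_smul_le {a : E} (ha : a ≠ 0) (b : E) :
    ‖‖a‖⁻¹ • a - ‖b‖⁻¹ • b‖ ≤ 2 * ‖a‖⁻¹ * ‖a - b‖ := by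
  -- pull `‖a‖⁻¹` out; what remains is `a - b` plus a multiple of the unit vector along `b`
  have split : ‖a‖⁻¹ • a - ‖b‖⁻¹ • b = ‖a‖⁻¹ • ((a - b) + (‖b‖ - ‖a‖) • (‖b‖⁻¹ • b)) := by
    rcases eq_or_ne b 0 with rfl | hb
    · simp
    have hscalar : ‖a‖⁻¹ * (‖b‖ - ‖a‖) * ‖b‖⁻¹ = ‖a‖⁻¹ - ‖b‖⁻¹ := by
      field_simp [norm_ne_zero_iff.mpr hb]
    rw [smul_add, smul_smul, smul_smul, hscalar, sub_smul, smul_sub]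
    abel
  have hrest : ‖(‖b‖ - ‖a‖) • (‖b‖⁻¹ • b)‖ ≤ ‖a - b‖ := by
    rw [norm_smul, Real.norm_eq_abs, abs_sub_comm]
    calc |‖a‖ - ‖b‖| * ‖‖b‖⁻¹ • b‖ ≤ ‖a - b‖ * 1 :=
          mul_le_mul (abs_norm_sub_norm_le a b) (norm_inv_norm_smul_le_one b) (norm_nonneg _)
            (norm_nonneg _)
      _ = ‖a - b‖ := mul_one _
  calc ‖‖a‖⁻¹ • a - ‖b‖⁻¹ • b‖ = ‖a‖⁻¹ * ‖(a - b) + (‖b‖ - ‖a‖) • (‖b‖⁻¹ • b)‖ := by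
        rw [split, norm_smul, norm_inv, norm_norm]
    _ ≤ ‖a‖⁻¹ * (‖a - b‖ + ‖a - b‖) := by
        gcongr
        exact (norm_add_le _ _).trans (add_le_add_right hrest _)
    _ = 2 * ‖a‖⁻¹ * ‖a - b‖ := by ring

theorem cosSim_eq_inner_inv_norm_smul (a b : E) : cosSim a b = ⟪‖a‖⁻¹ • a, ‖b‖⁻¹ • b⟫ := by
  rw [cosSim, real_inner_smul_left, real_inner_smul_right, div_eq_mul_inv, mul_inv]
  ring

theorem abs_inner_sub_inner_le (u v u' v' : E) :
    |⟪u, v⟫ - ⟪u', v'⟫| ≤ ‖u - u'‖ * ‖v‖ + ‖u'‖ * ‖v - v'‖ := by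
  have split : ⟪u, v⟫ - ⟪u', v'⟫ = ⟪u - u', v⟫ + ⟪u', v - v'⟫ := by
    rw [inner_sub_left, inner_sub_right]; ring
  rw [split]
  exact (abs_add_le _ _).trans (add_le_add (abs_real_inner_le_norm _ _) (abs_real_inner_le_norm _ _))

theorem abs_cosSim_sub_cosSim_le {a b : E} (ha : a ≠ 0) (hb : b ≠ 0) (a' b' : E) :
    |cosSim a b - cosSim a' b'| ≤ 2 * ‖a‖⁻¹ * ‖a - a'‖ + 2 * ‖b‖⁻¹ * ‖b - b'‖ := by
  rw [cosSim_eq_inner_inv_norm_smul, cosSim_eq_inner_inv_norm_smul]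
  calc _ ≤ ‖‖a‖⁻¹ • a - ‖a'‖⁻¹ • a'‖ * 1 + 1 * ‖‖b‖⁻¹ • b - ‖b'‖⁻¹ • b'‖ :=
        (abs_inner_sub_inner_le _ _ _ _).trans <| by
          gcongr <;> exact norm_inv_norm_smul_le_one _
    _ ≤ _ := by
        rw [mul_one, one_mul]
        exact add_le_add (norm_inv_norm_smul_sub_inv_norm_smul_le ha a')
          (norm_inv_norm_smul_sub_inv_norm_smul_le hb b')

end Normalize

theorem EuclideanSpace.abs_sum_le_sqrt_card_mul_norm {ι : Type*} [Fintype ι]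
    (x : EuclideanSpace ℝ ι) : |∑ i, x i| ≤ √(Fintype.card ι) * ‖x‖ := by
  have h := sq_sum_le_card_mul_sum_sq (s := Finset.univ) (f := fun i => x i)
  rw [Finset.card_univ] at h
  refine abs_le_of_sq_le_sq ?_ (by positivity)
  rw [mul_pow, Real.sq_sqrt (Nat.cast_nonneg _), EuclideanSpace.norm_sq_eq]
  simpa only [Real.norm_eq_abs, sq_abs] using h

theorem IsProbVec.inv_norm_le_sqrt {n : ℕ} {p : EuclideanSpace ℝ (Fin n)} (hp : IsProbVec p) :
    ‖p‖⁻¹ ≤ √n := by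
  have h := EuclideanSpace.abs_sum_le_sqrt_card_mul_norm p
  rw [hp.2, abs_one, Fintype.card_fin] at h
  have hpos : 0 < ‖p‖ := pos_of_mul_pos_right (one_pos.trans_le h) (by positivity)
  rwa [inv_le_iff_one_le_mul₀ hpos]

theorem IsProbVec.ne_zero {n : ℕ} {p : EuclideanSpace ℝ (Fin n)} (hp : IsProbVec p) : p ≠ 0 := by
  rintro rfl
  simpa using hp.2

theorem stmt_3_general {n : ℕ} (p p' q q' : EuclideanSpace ℝ (Fin n))
    (hp : IsProbVec p) (hq : IsProbVec q) :
    |cosSim p q - cosSim p' q'| ≤ 2 * Real.sqrt n * (‖p - p'‖ + ‖q - q'‖) :=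
  calc |cosSim p q - cosSim p' q'| ≤ 2 * ‖p‖⁻¹ * ‖p - p'‖ + 2 * ‖q‖⁻¹ * ‖q - q'‖ :=
        abs_cosSim_sub_cosSim_le hp.ne_zero hq.ne_zero p' q'
    _ ≤ 2 * √n * ‖p - p'‖ + 2 * √n * ‖q - q'‖ := by
        gcongr
        · exact hp.inv_norm_le_sqrt
        · exact hq.inv_norm_le_sqrt
    _ = 2 * Real.sqrt n * (‖p - p'‖ + ‖q - q'‖) := by ring

/-- Cosine similarity restricted to the probability simplex in `ℝⁿ` is Lipschitz in
each argument with explicit constant `K_cos = 2√n`. -/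
theorem stmt_3 {n : ℕ} (hn : 1 ≤ n) (p p' q q' : EuclideanSpace ℝ (Fin n))
    (hp : IsProbVec p) (hp' : IsProbVec p') (hq : IsProbVec q) (hq' : IsProbVec q') :
    |cosSim p q - cosSim p' q'| ≤ 2 * Real.sqrt n * (‖p - p'‖ + ‖q - q'‖) :=
  stmt_3_general p p' q q' hp hq
end

section
/- (Dynamic linearized regret of online gradient descent against a moving comparator; Lemma E.1 skeleton.) Let E be a real inner product space, T ≥ 1, η > 0, G ≥ 0 and Γ ≥ 0. Let g₁, …, g_T ∈ E satisfy ‖gₜ‖ ≤ G, and define x_{t+1} = xₜ − η·gₜ for 1 ≤ t ≤ T from an arbitrary x₁ ∈ E. Let u₁, …, u_T ∈ E be a comparator sequence such that ‖x₁ − u₁‖ ≤ Γ and, for every 2 ≤ t ≤ T, both ‖xₜ − uₜ‖ ≤ Γ and ‖xₜ − u_{t−1}‖ ≤ Γ. Let P = Σ_{t=2}^{T} ‖uₜ − u_{t−1}‖ be the path length of the comparator. Then Σ_{t=1}^{T} ⟨gₜ, xₜ − uₜ⟩ ≤ η·T·G²/2 + (Γ² + 2Γ·P) / (2η). -/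
/-!
Expanding the square in one gradient step gives
`⟪gₜ, xₜ - uₜ⟫ = (‖xₜ - uₜ‖² - ‖xₜ₊₁ - uₜ‖²) / (2η) + η‖gₜ‖² / 2`.
The distance terms would telescope if the comparator did not move; when it moves, switching
from `uₜ₋₁` to `uₜ` in `‖xₜ - ·‖²` costs at most `2Γ‖uₜ - uₜ₋₁‖`, since
`A² - B² = (A - B)(A + B)` with `|A - B| ≤ ‖uₜ - uₜ₋₁‖` and `A + B ≤ 2Γ`.
-/

open Finset
open scoped RealInnerProductSpace

lemma sum_Icc_sub_le_of_le_pred_add (a b c : ℕ → ℝ) {T : ℕ} (hT : 1 ≤ T)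
    (h : ∀ t, 2 ≤ t → t ≤ T → a t ≤ b (t - 1) + c t) :
    ∑ t ∈ Icc 1 T, (a t - b t) ≤ a 1 - b T + ∑ t ∈ Icc 2 T, c t := by
  induction T, hT using Nat.le_induction with
  | base => simp
  | succ T hT ih =>
    rw [sum_Icc_succ_top (by omega), sum_Icc_succ_top (by omega)]
    have hlast : a (T + 1) ≤ b T + c (T + 1) := h (T + 1) (by omega) le_rfl
    linarith [ih fun t h2 hle => h t h2 (by omega)]

section InnerProductSpace

variable {E : Type*} [NormedAddCommGroup E] [InnerProductSpace ℝ E]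

lemma real_inner_sub_eq_of_gradient_step (g x u : E) {η : ℝ} (hη : η ≠ 0) :
    ⟪g, x - u⟫ = (‖x - u‖ ^ 2 - ‖x - η • g - u‖ ^ 2) / (2 * η) + η * ‖g‖ ^ 2 / 2 := by
  rw [sub_right_comm, norm_sub_sq_real (x - u), real_inner_smul_right, norm_smul,
    real_inner_comm, Real.norm_eq_abs, mul_pow, sq_abs]
  field_simp
  ring

lemma real_inner_sub_le_of_gradient_step {g : E} (x u : E) {η G : ℝ} (hη : 0 < η)
    (hg : ‖g‖ ≤ G) :
    ⟪g, x - u⟫ ≤ (‖x - u‖ ^ 2 - ‖x - η • g - u‖ ^ 2) / (2 * η) + η * G ^ 2 / 2 := by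
  rw [real_inner_sub_eq_of_gradient_step g x u hη.ne']
  gcongr

end InnerProductSpace

lemma sq_norm_sub_le_sq_norm_sub_add {E : Type*} [SeminormedAddCommGroup E] {x u v : E}
    {Γ : ℝ} (hu : ‖x - u‖ ≤ Γ) (hv : ‖x - v‖ ≤ Γ) :
    ‖x - u‖ ^ 2 ≤ ‖x - v‖ ^ 2 + 2 * Γ * ‖u - v‖ := by
  have hdiff : ‖x - u‖ - ‖x - v‖ ≤ ‖u - v‖ := by
    simpa [norm_sub_rev u v] using norm_sub_norm_le (x - u) (x - v)
  have hsum : 0 ≤ ‖x - u‖ + ‖x - v‖ := by positivity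
  nlinarith [mul_le_mul_of_nonneg_right hdiff hsum, norm_nonneg (u - v)]

theorem stmt_11_general {E : Type*} [NormedAddCommGroup E] [InnerProductSpace ℝ E]
    {T : ℕ} (hT : 1 ≤ T) (η G Γ : ℝ) (hη : 0 < η)
    (g x u : ℕ → E)
    (hg : ∀ t, 1 ≤ t → t ≤ T → ‖g t‖ ≤ G)
    (hupd : ∀ t, 1 ≤ t → t ≤ T → x (t + 1) = x t - η • g t)
    (hB1 : ‖x 1 - u 1‖ ≤ Γ)
    (hB : ∀ t, 2 ≤ t → t ≤ T → ‖x t - u t‖ ≤ Γ ∧ ‖x t - u (t - 1)‖ ≤ Γ) :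
    ∑ t ∈ Finset.Icc 1 T, (inner ℝ (g t) (x t - u t) : ℝ) ≤
      η * T * G ^ 2 / 2 +
        (Γ ^ 2 + 2 * Γ * ∑ t ∈ Finset.Icc 2 T, ‖u t - u (t - 1)‖) / (2 * η) := by
  set a : ℕ → ℝ := fun t => ‖x t - u t‖ ^ 2
  set b : ℕ → ℝ := fun t => ‖x (t + 1) - u t‖ ^ 2
  have hstep : ∀ t ∈ Icc 1 T, ⟪g t, x t - u t⟫ ≤ (a t - b t) / (2 * η) + η * G ^ 2 / 2 := by
    intro t ht
    obtain ⟨h1, hle⟩ := mem_Icc.mp ht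
    simpa only [a, b, hupd t h1 hle] using real_inner_sub_le_of_gradient_step _ _ hη (hg t h1 hle)
  have hdrift : ∀ t, 2 ≤ t → t ≤ T → a t ≤ b (t - 1) + 2 * Γ * ‖u t - u (t - 1)‖ := by
    intro t h2 hle
    simpa only [a, b, Nat.sub_add_cancel (by omega : 1 ≤ t)]
      using sq_norm_sub_le_sq_norm_sub_add (hB t h2 hle).1 (hB t h2 hle).2
  have hdist :
      ∑ t ∈ Icc 1 T, (a t - b t) ≤ Γ ^ 2 + 2 * Γ * ∑ t ∈ Icc 2 T, ‖u t - u (t - 1)‖ := by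
    have ha1 : a 1 ≤ Γ ^ 2 := pow_le_pow_left₀ (norm_nonneg _) hB1 2
    have hbT : 0 ≤ b T := sq_nonneg _
    rw [mul_sum]
    linarith [sum_Icc_sub_le_of_le_pred_add a b _ hT hdrift]
  calc ∑ t ∈ Icc 1 T, ⟪g t, x t - u t⟫
      ≤ ∑ t ∈ Icc 1 T, ((a t - b t) / (2 * η) + η * G ^ 2 / 2) := sum_le_sum hstep
    _ = (∑ t ∈ Icc 1 T, (a t - b t)) / (2 * η) + T * (η * G ^ 2 / 2) := by
      rw [sum_add_distrib, ← sum_div, sum_const, Nat.card_Icc, Nat.add_sub_cancel, nsmul_eq_mul]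
    _ ≤ (Γ ^ 2 + 2 * Γ * ∑ t ∈ Icc 2 T, ‖u t - u (t - 1)‖) / (2 * η) + T * (η * G ^ 2 / 2) := by
      gcongr
    _ = _ := by ring

/-- Dynamic linearized regret of online gradient descent against a moving
comparator: with `‖gₜ‖ ≤ G`, iterates `x_{t+1} = xₜ − η·gₜ`, comparators `uₜ`
satisfying the `Γ`-boundedness conditions, and path length
`P = ∑_{t=2}^{T} ‖uₜ − uₜ₋₁‖`, we have
`∑ₜ ⟨gₜ, xₜ − uₜ⟩ ≤ η·T·G²/2 + (Γ² + 2Γ·P)/(2η)`. -/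
theorem stmt_11 {E : Type*} [NormedAddCommGroup E] [InnerProductSpace ℝ E]
    {T : ℕ} (hT : 1 ≤ T) (η G Γ : ℝ) (hη : 0 < η) (hG : 0 ≤ G) (hΓ : 0 ≤ Γ)
    (g x u : ℕ → E)
    (hg : ∀ t, 1 ≤ t → t ≤ T → ‖g t‖ ≤ G)
    (hupd : ∀ t, 1 ≤ t → t ≤ T → x (t + 1) = x t - η • g t)
    (hB1 : ‖x 1 - u 1‖ ≤ Γ)
    (hB : ∀ t, 2 ≤ t → t ≤ T → ‖x t - u t‖ ≤ Γ ∧ ‖x t - u (t - 1)‖ ≤ Γ) :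
    ∑ t ∈ Finset.Icc 1 T, (inner ℝ (g t) (x t - u t) : ℝ) ≤
      η * T * G ^ 2 / 2 +
        (Γ ^ 2 + 2 * Γ * ∑ t ∈ Finset.Icc 2 T, ‖u t - u (t - 1)‖) / (2 * η) :=
  stmt_11_general hT η G Γ hη g x u hg hupd hB1 hB
end

section
/- (Block approximation lemma; term (b) bound in the proof of Theorem 3.) Let X be a nonempty type, let a be an integer and τ ≥ 1, and set J = {a, a+1, …, a+τ−1}. For each t ∈ J let Fₜ : X → ℝ be bounded below, and let vₜ ≥ 0 for a+1 ≤ t ≤ a+τ−1 satisfy |Fₜ(x) − F_{t−1}(x)| ≤ vₜ for all x ∈ X and all a+1 ≤ t ≤ a+τ−1. Then the best fixed decision over the block J is within 2τ·V of the sum of instantaneous optima: inf_{x ∈ X} Σ_{t∈J} Fₜ(x) ≤ Σ_{t∈J} inf_{x ∈ X} Fₜ(x) + 2τ·V, where V = Σ_{t=a+1}^{a+τ−1} vₜ. -/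
/-!
Telescoping the variation bound shows that every `F t` in the block stays uniformly within
`V` of `F a`. Hence the fixed decision costs at most `τ (inf F a + V)` over the block, while
each instantaneous optimum is at least `inf F a - V`; the two errors add up to `2τV`.
-/

open Finset

theorem norm_sub_le_sum_Icc_of_norm_sub_pred_le {E : Type*} [SeminormedAddCommGroup E]
    {f : ℤ → E} {v : ℤ → ℝ} {a t : ℤ} (hat : a ≤ t)
    (h : ∀ s, a + 1 ≤ s → s ≤ t → ‖f s - f (s - 1)‖ ≤ v s) :
    ‖f t - f a‖ ≤ ∑ s ∈ Icc (a + 1) t, v s := by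
  induction t, hat using Int.leInduction with
  | base => simp
  | succ n hn ih =>
    rw [← insert_Icc_right_eq_Icc_add_one (by omega), sum_insert (by simp)]
    calc ‖f (n + 1) - f a‖ ≤ ‖f (n + 1) - f n‖ + ‖f n - f a‖ :=
          norm_sub_le_norm_sub_add_norm_sub _ _ _
      _ ≤ v (n + 1) + ∑ s ∈ Icc (a + 1) n, v s := by
        gcongr
        · simpa using h (n + 1) (by omega) le_rfl
        · exact ih fun s hs hsn => h s hs (by omega)

theorem ciInf_le_ciInf_add_of_le {X : Type*} [Nonempty X] {G H : X → ℝ} {c : ℝ}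
    (hG : BddBelow (Set.range G)) (h : ∀ x, G x ≤ H x + c) :
    ⨅ x, G x ≤ (⨅ x, H x) + c := by
  have : (⨅ x, G x) - c ≤ ⨅ x, H x :=
    le_ciInf fun x => by linarith [ciInf_le hG x, h x]
  linarith

/-- Block approximation lemma (term (b) bound): over a block `J = {a, …, a+τ−1}`
of losses `Fₜ : X → ℝ` bounded below, with consecutive-loss variation bounded by
`vₜ`, the best fixed decision over the block is within `2τ·V` of the sum of
instantaneous optima, where `V = ∑_{t=a+1}^{a+τ−1} vₜ`. -/
theorem stmt_12 {X : Type*} [Nonempty X] (a : ℤ) (τ : ℕ) (hτ : 1 ≤ τ)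
    (F : ℤ → X → ℝ) (v : ℤ → ℝ)
    (hbdd : ∀ t ∈ Finset.Icc a (a + τ - 1), BddBelow (Set.range (F t)))
    (hv : ∀ t, a + 1 ≤ t → t ≤ a + τ - 1 → 0 ≤ v t)
    (hvar : ∀ t, a + 1 ≤ t → t ≤ a + τ - 1 → ∀ x : X, |F t x - F (t - 1) x| ≤ v t) :
    ⨅ x : X, ∑ t ∈ Finset.Icc a (a + τ - 1), F t x ≤
      (∑ t ∈ Finset.Icc a (a + τ - 1), ⨅ x : X, F t x) +
        2 * τ * ∑ t ∈ Finset.Icc (a + 1) (a + τ - 1), v t := by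
  set J := Icc a (a + τ - 1)
  set V := ∑ t ∈ Icc (a + 1) (a + τ - 1), v t
  have hcard : (#J : ℝ) = τ := by simp [J]
  have hclose : ∀ t ∈ J, ∀ x, |F t x - F a x| ≤ V := by
    intro t ht x
    rw [mem_Icc] at ht
    calc |F t x - F a x| ≤ ∑ s ∈ Icc (a + 1) t, v s :=
          norm_sub_le_sum_Icc_of_norm_sub_pred_le (f := (F · x)) ht.1
            fun s hs hst => hvar s hs (hst.trans ht.2) x
      _ ≤ V := sum_le_sum_of_subset_of_nonneg (Icc_subset_Icc_right ht.2)
            fun s hs _ => hv s (mem_Icc.1 hs).1 (mem_Icc.1 hs).2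
  have hsum_bdd : BddBelow (Set.range fun x => ∑ t ∈ J, F t x) :=
    ⟨∑ t ∈ J, ⨅ y, F t y, by
      rintro _ ⟨x, rfl⟩
      exact sum_le_sum fun t ht => ciInf_le (hbdd t ht) x⟩
  have hfixed : ⨅ x, ∑ t ∈ J, F t x ≤ τ * (⨅ x, F a x) + τ * V := by
    rw [Real.mul_iInf_of_nonneg (by positivity)]
    refine ciInf_le_ciInf_add_of_le hsum_bdd fun x => ?_
    calc ∑ t ∈ J, F t x ≤ ∑ t ∈ J, (F a x + V) :=
          sum_le_sum fun t ht => by linarith [(abs_le.1 (hclose t ht x)).2]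
      _ = τ * F a x + τ * V := by rw [sum_const, nsmul_eq_mul, hcard]; ring
  have hoptima : τ * (⨅ x, F a x) ≤ (∑ t ∈ J, ⨅ x, F t x) + τ * V := by
    have := sum_le_sum fun t ht => ciInf_le_ciInf_add_of_le (H := F t) (c := V)
      (hbdd a (by simp [J]; omega)) fun x => by linarith [(abs_le.1 (hclose t ht x)).1]
    rwa [sum_add_distrib, sum_const, sum_const, nsmul_eq_mul, nsmul_eq_mul, hcard] at this
  linarith
end

section
/- (Deterministic skeleton of Theorem 3, dynamic regret bound.) Let E be a real inner product space, let K ⊆ E be the closed ball of radius Γ/2 centered at the origin (Γ ≥ 0), and let T ≥ 1, τ ≥ 1, η > 0, G ≥ 0. For 1 ≤ t ≤ T let fₜ : E → ℝ be bounded below on K, let xₜ ∈ K, and let gₜ ∈ E satisfy: (i) ‖gₜ‖ ≤ G; (ii) the subgradient inequality fₜ(xₜ) − fₜ(u) ≤ ⟨gₜ, xₜ − u⟩ for all u ∈ K; (iii) x_{t+1} = xₜ − η·gₜ for 1 ≤ t ≤ T−1. Suppose moreover vₜ ≥ 0 satisfies |fₜ(u) − f_{t−1}(u)| ≤ vₜ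 for all u ∈ K and 2 ≤ t ≤ T, and set V = Σ_{t=2}^{T} vₜ. Then Σ_{t=1}^{T} fₜ(xₜ) − Σ_{t=1}^{T} inf_{u∈K} fₜ(u) ≤ η·T·G²/2 + Γ²·(2·⌈T/τ⌉ − 1)/(2η) + 2τ·V. -/
/-!
Cut the rounds into `⌈T/τ⌉` consecutive windows of length at most `τ` and restart the
comparison on each window. Against a fixed `u ∈ K`, the subgradient inequality and the
telescoping of `‖xₜ - u‖²` along the gradient steps bound the regret on a window by
`Γ²/(2η)` plus `ηG²/2` per round. Within a window starting at round `a`, every `fₜ` stays within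
the window's total variation `V` of `f_a` on `K`, so both `fₜ u` and `inf_K fₜ` move by at most
`V`; taking `u` almost optimal for `f_a` therefore costs at most `2V` per round. The restarts
cost `Γ²/(2η)` per window, which is within the stated `Γ²(2⌈T/τ⌉ - 1)/(2η)`.
-/

open Finset

-- Only `d (t + 1) = e t` inside the range: the step out of the last round of the horizon has no
-- iterate to land on.
lemma sum_Ico_sub_le_of_succ_eq {d e : ℕ → ℝ} {a b : ℕ} (hd : 0 ≤ d a) (he : ∀ t, 0 ≤ e t)
    (hde : ∀ t, a ≤ t → t + 1 < b → d (t + 1) = e t) :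
    ∑ t ∈ Ico a b, (d t - e t) ≤ d a := by
  rcases le_or_gt b a with hba | hab
  · simpa [Ico_eq_empty_of_le hba] using hd
  obtain ⟨c, hac, rfl⟩ : ∃ c, a ≤ c ∧ b = c + 1 := ⟨b - 1, by omega, by omega⟩
  have htel : ∑ t ∈ Ico a c, (d t - e t) = ∑ t ∈ Ico a c, -(d (t + 1) - d t) :=
    sum_congr rfl fun t ht ↦ by
      rw [mem_Ico] at ht
      rw [hde t ht.1 (by omega)]
      ring
  rw [sum_Ico_succ_top hac, htel, sum_neg_distrib, sum_Ico_sub d hac]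
  linarith [he c]

lemma sub_ciInf_le_sub_ciInf_add {α : Type*} {s : Set α} (hs : s.Nonempty) {φ ψ : α → ℝ} {c : ℝ}
    (hψ : BddBelow (ψ '' s)) (hφψ : ∀ u ∈ s, |φ u - ψ u| ≤ c) {u : α} (hu : u ∈ s) :
    φ u - ⨅ w : s, φ w ≤ ψ u - (⨅ w : s, ψ w) + 2 * c := by
  have : Nonempty s := hs.to_subtype
  rw [Set.image_eq_range] at hψ
  have hinf : (⨅ w : s, ψ w) - c ≤ ⨅ w : s, φ w :=
    le_ciInf fun w ↦ by linarith [ciInf_le hψ w, (abs_le.1 (hφψ w w.2)).1]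
  linarith [(abs_le.1 (hφψ u hu)).2]

lemma le_of_forall_le_add_mul_sub_ciInf {ι : Type*} [Nonempty ι] {φ : ι → ℝ} {A B n : ℝ}
    (hn : 0 ≤ n) (h : ∀ i, A ≤ B + n * (φ i - ⨅ j, φ j)) : A ≤ B := by
  rcases hn.eq_or_lt with rfl | hn
  · simpa using h (Classical.arbitrary ι)
  have hinf : (A - B) / n + ⨅ j, φ j ≤ ⨅ j, φ j :=
    le_ciInf fun i ↦ by
      rw [div_add' _ _ _ hn.ne', div_le_iff₀ hn]
      linarith [h i]
  have : A - B ≤ 0 * n := (div_le_iff₀ hn).1 (by linarith)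
  linarith

lemma abs_sub_le_sum_Ico {y v : ℕ → ℝ} {a t b : ℕ} (hat : a ≤ t) (htb : t < b)
    (hv : ∀ k ∈ Ico (a + 1) b, |y k - y (k - 1)| ≤ v k) :
    |y t - y a| ≤ ∑ k ∈ Ico (a + 1) b, v k := by
  have hdist : dist (y a) (y t) ≤ ∑ i ∈ Ico a t, v (i + 1) :=
    dist_le_Ico_sum_of_dist_le hat fun {k} hak hkt ↦ by
      simpa [Real.dist_eq, abs_sub_comm] using hv (k + 1) (by simp; omega)
  rw [sum_Ico_add', Real.dist_eq, abs_sub_comm] at hdist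
  exact hdist.trans (sum_le_sum_of_subset_of_nonneg (Ico_subset_Ico_right (by omega))
    fun k hk _ ↦ (abs_nonneg _).trans (hv k hk))

section GradientDescent

variable {E : Type*} [NormedAddCommGroup E] [InnerProductSpace ℝ E]

lemma inner_eq_of_gradient_step {η : ℝ} (hη : η ≠ 0) (x g u : E) :
    inner ℝ g (x - u) = (‖x - u‖ ^ 2 - ‖x - η • g - u‖ ^ 2) / (2 * η) + η / 2 * ‖g‖ ^ 2 := by
  rw [show x - η • g - u = (x - u) - η • g by abel, norm_sub_sq_real (x - u), real_inner_smul_right,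
    norm_smul, Real.norm_eq_abs, mul_pow, sq_abs, real_inner_comm]
  field_simp
  ring

lemma sum_inner_le_of_gradient_steps {x g : ℕ → E} {η : ℝ} (hη : 0 < η) {a b : ℕ}
    (hupd : ∀ t, a ≤ t → t + 1 < b → x (t + 1) = x t - η • g t) (u : E) :
    ∑ t ∈ Ico a b, inner ℝ (g t) (x t - u) ≤
      ‖x a - u‖ ^ 2 / (2 * η) + η / 2 * ∑ t ∈ Ico a b, ‖g t‖ ^ 2 := by
  simp only [inner_eq_of_gradient_step hη.ne', sum_add_distrib, ← sum_div, ← mul_sum]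
  gcongr
  exact sum_Ico_sub_le_of_succ_eq (sq_nonneg _) (fun _ ↦ sq_nonneg _)
    fun t hat htb ↦ by rw [hupd t hat htb]

lemma sum_sub_le_of_gradient_steps {f : ℕ → E → ℝ} {x g : ℕ → E} {η G D : ℝ} (hη : 0 < η)
    {a b : ℕ} {u : E} (hxa : ‖x a - u‖ ≤ D) (hg : ∀ t ∈ Ico a b, ‖g t‖ ≤ G)
    (hsub : ∀ t ∈ Ico a b, f t (x t) - f t u ≤ inner ℝ (g t) (x t - u))
    (hupd : ∀ t, a ≤ t → t + 1 < b → x (t + 1) = x t - η • g t) :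
    ∑ t ∈ Ico a b, (f t (x t) - f t u) ≤ D ^ 2 / (2 * η) + (b - a : ℕ) * (η / 2 * G ^ 2) :=
  calc ∑ t ∈ Ico a b, (f t (x t) - f t u)
      ≤ ∑ t ∈ Ico a b, inner ℝ (g t) (x t - u) := sum_le_sum hsub
    _ ≤ ‖x a - u‖ ^ 2 / (2 * η) + η / 2 * ∑ t ∈ Ico a b, ‖g t‖ ^ 2 :=
        sum_inner_le_of_gradient_steps hη hupd u
    _ ≤ D ^ 2 / (2 * η) + η / 2 * ∑ t ∈ Ico a b, G ^ 2 := by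
        gcongr with t ht
        exact hg t ht
    _ = D ^ 2 / (2 * η) + (b - a : ℕ) * (η / 2 * G ^ 2) := by
        rw [sum_const, Nat.card_Ico, nsmul_eq_mul]
        ring

lemma sum_Ico_sub_ciInf_le {s : Set E} (hs : s.Nonempty) {f : ℕ → E → ℝ} {x g : ℕ → E}
    {v : ℕ → ℝ} {η G D : ℝ} (hη : 0 < η) {a b τ : ℕ} (hbτ : b ≤ a + τ)
    (hbdd : ∀ t ∈ Ico a b, BddBelow (f t '' s))
    (hxa : ∀ u ∈ s, ‖x a - u‖ ≤ D)
    (hg : ∀ t ∈ Ico a b, ‖g t‖ ≤ G)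
    (hsub : ∀ t ∈ Ico a b, ∀ u ∈ s, f t (x t) - f t u ≤ inner ℝ (g t) (x t - u))
    (hupd : ∀ t, a ≤ t → t + 1 < b → x (t + 1) = x t - η • g t)
    (hvar : ∀ t ∈ Ico (a + 1) b, ∀ u ∈ s, |f t u - f (t - 1) u| ≤ v t) :
    ∑ t ∈ Ico a b, (f t (x t) - (⨅ u : s, f t u) - η / 2 * G ^ 2) ≤
      D ^ 2 / (2 * η) + ∑ t ∈ Ico (a + 1) b, 2 * τ * v t := by
  rcases le_or_gt b a with hba | hab
  · simp only [Ico_eq_empty_of_le hba, Ico_eq_empty_of_le (hba.trans a.le_succ), sum_empty,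
      add_zero]
    exact div_nonneg (sq_nonneg D) (by positivity)
  have ha : a ∈ Ico a b := mem_Ico.2 ⟨le_rfl, hab⟩
  have : Nonempty s := hs.to_subtype
  set V := ∑ t ∈ Ico (a + 1) b, v t
  have hV : 0 ≤ V := sum_nonneg fun t ht ↦ (abs_nonneg _).trans (hvar t ht _ hs.some_mem)
  have hvariation : ∀ t ∈ Ico a b, ∀ w ∈ s, |f t w - f a w| ≤ V := fun t ht w hw ↦
    abs_sub_le_sum_Ico (y := fun t ↦ f t w) (mem_Ico.1 ht).1 (mem_Ico.1 ht).2
      fun k hk ↦ hvar k hk w hw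
  suffices hregret : ∑ t ∈ Ico a b, (f t (x t) - ⨅ u : s, f t u) ≤
      D ^ 2 / (2 * η) + (b - a : ℕ) * (η / 2 * G ^ 2 + 2 * V) by
    have hlen : ((b - a : ℕ) : ℝ) ≤ τ := by exact_mod_cast (by omega : b - a ≤ τ)
    rw [sum_sub_distrib, sum_const, Nat.card_Ico, nsmul_eq_mul, ← mul_sum]
    linarith [mul_le_mul_of_nonneg_right hlen hV]
  -- Compare with an arbitrary `u ∈ s`, then let `u` approach a minimiser of `f a`.
  refine le_of_forall_le_add_mul_sub_ciInf (φ := fun u : s ↦ f a u) (Nat.cast_nonneg (b - a))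
    fun ⟨u, hu⟩ ↦ ?_
  calc ∑ t ∈ Ico a b, (f t (x t) - ⨅ w : s, f t w)
      = ∑ t ∈ Ico a b, (f t (x t) - f t u) + ∑ t ∈ Ico a b, (f t u - ⨅ w : s, f t w) := by
        rw [← sum_add_distrib]
        exact sum_congr rfl fun _ _ ↦ by ring
    _ ≤ D ^ 2 / (2 * η) + (b - a : ℕ) * (η / 2 * G ^ 2) +
          ∑ t ∈ Ico a b, (f a u - (⨅ w : s, f a w) + 2 * V) :=
        add_le_add (sum_sub_le_of_gradient_steps hη (hxa u hu) hg (fun t ht ↦ hsub t ht u hu) hupd)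
          (sum_le_sum fun t ht ↦ sub_ciInf_le_sub_ciInf_add hs (hbdd a ha) (hvariation t ht) hu)
    _ = D ^ 2 / (2 * η) + (b - a : ℕ) * (η / 2 * G ^ 2 + 2 * V) +
          (b - a : ℕ) * (f a u - ⨅ w : s, f a w) := by
        rw [sum_const, Nat.card_Ico, nsmul_eq_mul]
        ring

end GradientDescent

lemma sum_Ico_add_sum_Ico_le_of_nonneg {v : ℕ → ℝ} {lo c hi : ℕ} (hloc : lo ≤ c) (hchi : c ≤ hi)
    (hv : ∀ t ∈ Ico (lo + 1) hi, 0 ≤ v t) :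
    ∑ t ∈ Ico (lo + 1) c, v t + ∑ t ∈ Ico (c + 1) hi, v t ≤ ∑ t ∈ Ico (lo + 1) hi, v t := by
  have hdisj : Disjoint (Ico (lo + 1) c) (Ico (c + 1) hi) :=
    disjoint_left.2 fun t h h' ↦ by simp only [mem_Ico] at h h'; omega
  rw [← sum_union hdisj]
  refine sum_le_sum_of_subset_of_nonneg (fun t ht ↦ ?_) fun t ht _ ↦ hv t ht
  simp only [mem_union, mem_Ico] at ht ⊢
  omega

lemma sum_Ico_le_of_forall_window {F v : ℕ → ℝ} {C : ℝ} {τ hi : ℕ} (hC : 0 ≤ C) (N : ℕ) :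
    ∀ lo, hi ≤ lo + N * τ → (∀ t ∈ Ico (lo + 1) hi, 0 ≤ v t) →
      (∀ a b, lo ≤ a → a < b → b ≤ hi → b ≤ a + τ →
        ∑ t ∈ Ico a b, F t ≤ C + ∑ t ∈ Ico (a + 1) b, v t) →
      ∑ t ∈ Ico lo hi, F t ≤ N * C + ∑ t ∈ Ico (lo + 1) hi, v t := by
  induction N with
  | zero =>
    intro lo hN _ _
    simp [Ico_eq_empty_of_le (show hi ≤ lo by simpa using hN),
      Ico_eq_empty_of_le (show hi ≤ lo + 1 by simp at hN; omega)]
  | succ N ih =>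
    intro lo hN hv hblock
    rcases le_or_gt hi lo with hhi | hlo
    · simp only [Ico_eq_empty_of_le hhi, Ico_eq_empty_of_le (hhi.trans lo.le_succ), sum_empty]
      positivity
    set c := min hi (lo + τ)
    have hτ : 0 < τ := Nat.pos_of_ne_zero fun hτ ↦ by simp [hτ] at hN; omega
    have hloc : lo < c := lt_min hlo (by omega)
    have hchi : c ≤ hi := min_le_left _ _
    have hfirst := hblock lo c le_rfl hloc hchi (min_le_right _ _)
    have hrest := ih c (by rw [add_mul, one_mul] at hN; omega)
      (fun t ht ↦ hv t (Ico_subset_Ico_left (by omega) ht))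
      (fun a b hca ↦ hblock a b (hloc.le.trans hca))
    have hv_split := sum_Ico_add_sum_Ico_le_of_nonneg hloc.le hchi hv
    rw [← sum_Ico_consecutive F hloc.le hchi]
    push_cast
    linarith

theorem stmt_13_general {E : Type*} [NormedAddCommGroup E] [InnerProductSpace ℝ E]
    (Γ : ℝ) {T τ : ℕ} (hT : 1 ≤ T) (hτ : 1 ≤ τ)
    (η G : ℝ) (hη : 0 < η)
    (f : ℕ → E → ℝ) (x g : ℕ → E) (v : ℕ → ℝ)
    (hbdd : ∀ t, 1 ≤ t → t ≤ T →
      BddBelow (f t '' Metric.closedBall (0 : E) (Γ / 2)))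
    (hx : ∀ t, 1 ≤ t → t ≤ T → x t ∈ Metric.closedBall (0 : E) (Γ / 2))
    (hg : ∀ t, 1 ≤ t → t ≤ T → ‖g t‖ ≤ G)
    (hsub : ∀ t, 1 ≤ t → t ≤ T → ∀ u ∈ Metric.closedBall (0 : E) (Γ / 2),
      f t (x t) - f t u ≤ (inner ℝ (g t) (x t - u) : ℝ))
    (hupd : ∀ t, 1 ≤ t → t ≤ T - 1 → x (t + 1) = x t - η • g t)
    (hvar : ∀ t, 2 ≤ t → t ≤ T → ∀ u ∈ Metric.closedBall (0 : E) (Γ / 2),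
      |f t u - f (t - 1) u| ≤ v t) :
    (∑ t ∈ Finset.Icc 1 T, f t (x t)) -
        (∑ t ∈ Finset.Icc 1 T, ⨅ u : Metric.closedBall (0 : E) (Γ / 2), f t u) ≤
      η * T * G ^ 2 / 2 +
        Γ ^ 2 * (2 * (⌈(T : ℝ) / (τ : ℝ)⌉ : ℝ) - 1) / (2 * η) +
        2 * τ * ∑ t ∈ Finset.Icc 2 T, v t := by
  set K := Metric.closedBall (0 : E) (Γ / 2)
  have hK : K.Nonempty := ⟨x 1, hx 1 le_rfl hT⟩
  have hv : ∀ t ∈ Ico 2 (T + 1), 0 ≤ v t := fun t ht ↦ by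
    rw [mem_Ico] at ht
    exact (abs_nonneg _).trans (hvar t ht.1 (by omega) _ hK.some_mem)
  have hwindow : ∀ a b, 1 ≤ a → a < b → b ≤ T + 1 → b ≤ a + τ →
      ∑ t ∈ Ico a b, (f t (x t) - (⨅ u : K, f t u) - η / 2 * G ^ 2) ≤
        Γ ^ 2 / (2 * η) + ∑ t ∈ Ico (a + 1) b, 2 * τ * v t := by
    intro a b ha hab hb hbτ
    have hmem : ∀ t ∈ Ico a b, 1 ≤ t ∧ t ≤ T := fun t ht ↦ by rw [mem_Ico] at ht; omega
    have hxa : ∀ u ∈ K, ‖x a - u‖ ≤ Γ := fun u hu ↦ by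
      have hxaK := hx a ha (by omega)
      rw [mem_closedBall_zero_iff] at hxaK hu
      linarith [norm_sub_le (x a) u]
    exact sum_Ico_sub_ciInf_le hK hη hbτ (fun t ht ↦ (hmem t ht).elim (hbdd t)) hxa
      (fun t ht ↦ (hmem t ht).elim (hg t)) (fun t ht ↦ (hmem t ht).elim (hsub t))
      (fun t hat htb ↦ hupd t (by omega) (by omega))
      (fun t ht ↦ by rw [mem_Ico] at ht; exact hvar t (by omega) (by omega))
  rw [← Int.natCast_ceil_eq_ceil (by positivity), Int.cast_natCast, ← sum_sub_distrib,
    ← Ico_add_one_right_eq_Icc, ← Ico_add_one_right_eq_Icc]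
  set N := ⌈(T : ℝ) / τ⌉₊
  have hτ0 : (0 : ℝ) < τ := by exact_mod_cast hτ
  have hN : (1 : ℝ) ≤ N := by exact_mod_cast Nat.ceil_pos.2 (by positivity)
  have hcover : T + 1 ≤ 1 + N * τ := by
    have : (T : ℝ) ≤ N * τ := (div_le_iff₀ hτ0).1 (Nat.le_ceil _)
    have : T ≤ N * τ := by exact_mod_cast this
    omega
  have hsum := sum_Ico_le_of_forall_window (by positivity : 0 ≤ Γ ^ 2 / (2 * η)) N 1 hcover
    (fun t ht ↦ mul_nonneg (by positivity) (hv t ht)) hwindow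
  rw [sum_sub_distrib, sum_const, Nat.card_Ico, Nat.add_sub_cancel, nsmul_eq_mul, ← mul_sum]
    at hsum
  have hblocks : (N : ℝ) * (Γ ^ 2 / (2 * η)) ≤ (2 * N - 1) * (Γ ^ 2 / (2 * η)) :=
    mul_le_mul_of_nonneg_right (by linarith) (by positivity)
  linear_combination hsum + hblocks

/-- Deterministic skeleton of Theorem 3 (dynamic regret bound): for subgradient
descent iterates in the closed ball `K` of radius `Γ/2`, with gradient bound `G`,
per-step loss variation `vₜ` on `K`, and block length `τ`, the dynamic regret
against per-round optima over `K` is at most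
`η·T·G²/2 + Γ²·(2⌈T/τ⌉ − 1)/(2η) + 2τ·V` where `V = ∑_{t=2}^{T} vₜ`. -/
theorem stmt_13 {E : Type*} [NormedAddCommGroup E] [InnerProductSpace ℝ E]
    (Γ : ℝ) (hΓ : 0 ≤ Γ) {T τ : ℕ} (hT : 1 ≤ T) (hτ : 1 ≤ τ)
    (η G : ℝ) (hη : 0 < η) (hG : 0 ≤ G)
    (f : ℕ → E → ℝ) (x g : ℕ → E) (v : ℕ → ℝ)
    (hbdd : ∀ t, 1 ≤ t → t ≤ T →
      BddBelow (f t '' Metric.closedBall (0 : E) (Γ / 2)))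
    (hx : ∀ t, 1 ≤ t → t ≤ T → x t ∈ Metric.closedBall (0 : E) (Γ / 2))
    (hg : ∀ t, 1 ≤ t → t ≤ T → ‖g t‖ ≤ G)
    (hsub : ∀ t, 1 ≤ t → t ≤ T → ∀ u ∈ Metric.closedBall (0 : E) (Γ / 2),
      f t (x t) - f t u ≤ (inner ℝ (g t) (x t - u) : ℝ))
    (hupd : ∀ t, 1 ≤ t → t ≤ T - 1 → x (t + 1) = x t - η • g t)
    (hv : ∀ t, 2 ≤ t → t ≤ T → 0 ≤ v t)
    (hvar : ∀ t, 2 ≤ t → t ≤ T → ∀ u ∈ Metric.closedBall (0 : E) (Γ / 2),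
      |f t u - f (t - 1) u| ≤ v t) :
    (∑ t ∈ Finset.Icc 1 T, f t (x t)) -
        (∑ t ∈ Finset.Icc 1 T, ⨅ u : Metric.closedBall (0 : E) (Γ / 2), f t u) ≤
      η * T * G ^ 2 / 2 +
        Γ ^ 2 * (2 * (⌈(T : ℝ) / (τ : ℝ)⌉ : ℝ) - 1) / (2 * η) +
        2 * τ * ∑ t ∈ Finset.Icc 2 T, v t :=
  stmt_13_general Γ hT hτ η G hη f x g v hbdd hx hg hsub hupd hvar
end
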